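/- There exist two-qubit density matrices ρ and ρ̃ such that: (i) all their global and marginal second-order moments coincide, ‖r^{(1)}‖² = ‖r̃^{(1)}‖², ‖r^{(2)}‖² = ‖r̃^{(2)}‖², ‖T‖² = ‖T̃‖²; (ii) ρ is separable while ρ̃ is not separable; and consequently (iii) there are no U₁, U₂ ∈ SU(2) with ρ̃ = (U₁ ⊗ U₂) ρ (U₁ ⊗ U₂)†. -/

import Mathlib

open Matrix Complex BigOperators Kronecker
open scoped ComplexOrder

/-- The three Pauli matrices σ₁, σ₂, σ₃ (indexed by `Fin 3`). -/
noncomputable def pauli : Fin 3 → Matrix (Fin 2) (Fin 2) ℂ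
  | 0 => !![0, 1; 1, 0]
  | 1 => !![0, -Complex.I; Complex.I, 0]
  | 2 => !![1, 0; 0, -1]

/-- Marginal Bloch vector of the first qubit: `r⁽¹⁾_i = Tr (ρ (σ_i ⊗ 1))`. -/
noncomputable def bloch1 (ρ : Matrix (Fin 2 × Fin 2) (Fin 2 × Fin 2) ℂ) : Fin 3 → ℝ :=
  fun i => ((ρ * (pauli i ⊗ₖ (1 : Matrix (Fin 2) (Fin 2) ℂ))).trace).re

/-- Marginal Bloch vector of the second qubit: `r⁽²⁾_j = Tr (ρ (1 ⊗ σ_j))`. -/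
noncomputable def bloch2 (ρ : Matrix (Fin 2 × Fin 2) (Fin 2 × Fin 2) ℂ) : Fin 3 → ℝ :=
  fun j => ((ρ * ((1 : Matrix (Fin 2) (Fin 2) ℂ) ⊗ₖ pauli j)).trace).re

/-- Correlation matrix: `T_{ij} = Tr (ρ (σ_i ⊗ σ_j))`. -/
noncomputable def corr (ρ : Matrix (Fin 2 × Fin 2) (Fin 2 × Fin 2) ℂ) :
    Matrix (Fin 3) (Fin 3) ℝ :=
  Matrix.of fun i j => ((ρ * (pauli i ⊗ₖ pauli j)).trace).re

/-- Membership in SU(2): unitary 2×2 complex matrix of determinant 1. -/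
def IsSU2 (U : Matrix (Fin 2) (Fin 2) ℂ) : Prop := Uᴴ * U = 1 ∧ U.det = 1

/-- Membership in SO(3): orthogonal 3×3 real matrix of determinant 1. -/
def IsSO3 (Q : Matrix (Fin 3) (Fin 3) ℝ) : Prop := Qᵀ * Q = 1 ∧ Q.det = 1

/-- A two-qubit state is separable if it is a finite convex combination of Kronecker
products of 2×2 density matrices. -/
def SeparableState (ρ : Matrix (Fin 2 × Fin 2) (Fin 2 × Fin 2) ℂ) : Prop :=
  ∃ (n : ℕ) (p : Fin n → ℝ) (A B : Fin n → Matrix (Fin 2) (Fin 2) ℂ),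
    (∀ k, 0 ≤ p k) ∧ (∑ k, p k = 1) ∧
    (∀ k, (A k).PosSemidef ∧ (A k).trace = 1) ∧
    (∀ k, (B k).PosSemidef ∧ (B k).trace = 1) ∧
    ρ = ∑ k, (p k : ℂ) • (A k ⊗ₖ B k)

/-!
Both states are Bell-diagonal, `ρ_t = (1 ⊗ 1 + ∑ tᵢ σᵢ ⊗ σᵢ) / 4`. Trace orthogonality of the Pauli
matrices shows that such a state has vanishing Bloch vectors and correlation matrix `diag t`, so all
its second moments are fixed by `‖t‖²`. Take `t = (0, 0, 1)`, the classical mixture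
`(|00⟩⟨00| + |11⟩⟨11|) / 2`, and `t̃ = (2/3, 2/3, -1/3)`, the mixture `2/3 |ψ⁺⟩⟨ψ⁺| + 1/3 ρ_t`;
both have `‖t‖² = 1`. The operator `W = ρ_{(-1,-1,1)}` satisfies `Tr ((A ⊗ B) W) = Tr (A σ₃ B σ₃) / 2 ≥ 0`
on product states, hence on separable ones, while `Tr (ρ_{t̃} W) = -1/6`. Finally, conjugation by
`U₁ ⊗ U₂` preserves separability, so it cannot carry `ρ_t` to `ρ_{t̃}`.
-/

open MatrixOrder in
lemma Matrix.PosSemidef.trace_mul_nonneg {𝕜 n : Type*} [RCLike 𝕜] [Fintype n] [DecidableEq n]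
    {A B : Matrix n n 𝕜} (hA : A.PosSemidef) (hB : B.PosSemidef) : 0 ≤ (A * B).trace := by
  obtain ⟨C, rfl⟩ := CStarAlgebra.nonneg_iff_eq_star_mul_self.mp hA.nonneg
  rw [star_eq_conjTranspose, Matrix.mul_assoc, trace_mul_comm]
  exact (hB.mul_mul_conjTranspose_same C).trace_nonneg

lemma SeparableState.posSemidef {ρ : Matrix (Fin 2 × Fin 2) (Fin 2 × Fin 2) ℂ}
    (hρ : SeparableState ρ) : ρ.PosSemidef := by
  obtain ⟨n, p, A, B, hp, -, hA, hB, rfl⟩ := hρ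
  exact posSemidef_sum _ fun k _ =>
    ((hA k).1.kronecker (hB k).1).smul (Complex.zero_le_real.mpr (hp k))

lemma SeparableState.re_trace_mul_nonneg {ρ W : Matrix (Fin 2 × Fin 2) (Fin 2 × Fin 2) ℂ}
    (hρ : SeparableState ρ)
    (hW : ∀ A B : Matrix (Fin 2) (Fin 2) ℂ, A.PosSemidef → B.PosSemidef →
      0 ≤ ((A ⊗ₖ B) * W).trace.re) :
    0 ≤ (ρ * W).trace.re := by
  obtain ⟨n, p, A, B, hp, -, hA, hB, rfl⟩ := hρ
  simp only [Finset.sum_mul, trace_sum, smul_mul_assoc, trace_smul, smul_eq_mul, Complex.re_sum,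
    Complex.re_ofReal_mul]
  exact Finset.sum_nonneg fun k _ => mul_nonneg (hp k) (hW _ _ (hA k).1 (hB k).1)

lemma SeparableState.unitary_conj {ρ : Matrix (Fin 2 × Fin 2) (Fin 2 × Fin 2) ℂ}
    (hρ : SeparableState ρ) {U₁ U₂ : Matrix (Fin 2) (Fin 2) ℂ}
    (h₁ : U₁ᴴ * U₁ = 1) (h₂ : U₂ᴴ * U₂ = 1) :
    SeparableState ((U₁ ⊗ₖ U₂) * ρ * (U₁ ⊗ₖ U₂)ᴴ) := by
  obtain ⟨n, p, A, B, hp, hsum, hA, hB, rfl⟩ := hρ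
  refine ⟨n, p, fun k => U₁ * A k * U₁ᴴ, fun k => U₂ * B k * U₂ᴴ, hp, hsum,
    fun k => ⟨(hA k).1.mul_mul_conjTranspose_same U₁, ?_⟩,
    fun k => ⟨(hB k).1.mul_mul_conjTranspose_same U₂, ?_⟩, ?_⟩
  · rw [trace_mul_cycle, h₁, Matrix.one_mul, (hA k).2]
  · rw [trace_mul_cycle, h₂, Matrix.one_mul, (hB k).2]
  · simp only [Finset.mul_sum, Finset.sum_mul, mul_smul_comm, smul_mul_assoc,
      conjTranspose_kronecker, ← mul_kronecker_mul]

lemma isHermitian_pauli (i : Fin 3) : (pauli i).IsHermitian := by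
  fin_cases i <;> ext a b <;> fin_cases a <;> fin_cases b <;> simp [pauli]

lemma trace_pauli (i : Fin 3) : (pauli i).trace = 0 := by
  fin_cases i <;> simp [pauli, trace, Fin.sum_univ_two]

lemma trace_pauli_mul_pauli (i j : Fin 3) :
    (pauli i * pauli j).trace = if i = j then 2 else 0 := by
  fin_cases i <;> fin_cases j <;> norm_num [pauli, trace, mul_apply, Fin.sum_univ_two]

noncomputable def bellDiagonal (t : Fin 3 → ℝ) : Matrix (Fin 2 × Fin 2) (Fin 2 × Fin 2) ℂ :=
  (1 / 4 : ℂ) • (1 + ∑ i, (t i : ℂ) • (pauli i ⊗ₖ pauli i))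

lemma trace_bellDiagonal_mul_kronecker (t : Fin 3 → ℝ) (X Y : Matrix (Fin 2) (Fin 2) ℂ) :
    (bellDiagonal t * (X ⊗ₖ Y)).trace =
      (X.trace * Y.trace + ∑ i, (t i : ℂ) * ((pauli i * X).trace * (pauli i * Y).trace)) / 4 := by
  simp only [bellDiagonal, smul_mul_assoc, add_mul, one_mul, Finset.sum_mul, trace_smul,
    trace_add, trace_sum, ← mul_kronecker_mul, trace_kronecker, smul_eq_mul]
  ring

lemma trace_bellDiagonal (t : Fin 3 → ℝ) : (bellDiagonal t).trace = 1 := by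
  have := trace_bellDiagonal_mul_kronecker t 1 1
  norm_num [trace_pauli] at this
  exact this

lemma bloch1_bellDiagonal (t : Fin 3 → ℝ) : bloch1 (bellDiagonal t) = 0 := by
  ext k
  simp [bloch1, trace_bellDiagonal_mul_kronecker, trace_pauli]

lemma bloch2_bellDiagonal (t : Fin 3 → ℝ) : bloch2 (bellDiagonal t) = 0 := by
  ext k
  simp [bloch2, trace_bellDiagonal_mul_kronecker, trace_pauli]

lemma corr_bellDiagonal (t : Fin 3 → ℝ) : corr (bellDiagonal t) = diagonal t := by
  ext k l
  by_cases h : k = l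
  · subst h
    simp [corr, trace_bellDiagonal_mul_kronecker, trace_pauli, trace_pauli_mul_pauli]
    ring
  · simp [corr, trace_bellDiagonal_mul_kronecker, trace_pauli, trace_pauli_mul_pauli, h, Ne.symm h]

lemma sum_sq_corr_bellDiagonal (t : Fin 3 → ℝ) :
    ∑ i, ∑ j, corr (bellDiagonal t) i j ^ 2 = ∑ i, t i ^ 2 := by
  simp [corr_bellDiagonal, diagonal_apply, ite_pow]

lemma bellDiagonal_smul_add_smul (t s : Fin 3 → ℝ) {a b : ℝ} (hab : a + b = 1) :
    bellDiagonal (a • t + b • s) = (a : ℂ) • bellDiagonal t + (b : ℂ) • bellDiagonal s := by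
  obtain rfl : b = 1 - a := by linarith
  simp only [bellDiagonal, Pi.add_apply, Pi.smul_apply, smul_eq_mul, Complex.ofReal_add,
    Complex.ofReal_mul, Complex.ofReal_sub, Complex.ofReal_one, add_smul, mul_smul,
    Finset.sum_add_distrib, ← Finset.smul_sum]
  module

lemma bellDiagonal_one_one_neg_one :
    bellDiagonal ![1, 1, -1] =
      (1 / 2 : ℂ) • vecMulVec (fun x => if x.1 = x.2 then 0 else 1)
        (star fun x : Fin 2 × Fin 2 => if x.1 = x.2 then 0 else 1) := by
  ext ⟨i, j⟩ ⟨k, l⟩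
  fin_cases i <;> fin_cases j <;> fin_cases k <;> fin_cases l <;>
    norm_num [bellDiagonal, Fin.sum_univ_three, pauli, vecMulVec_apply, one_apply, cons_val_two]

lemma bellDiagonal_zero_zero_one :
    bellDiagonal ![0, 0, 1] = ∑ k : Fin 2, ((1 / 2 : ℝ) : ℂ) • (single k k 1 ⊗ₖ single k k 1) := by
  ext ⟨i, j⟩ ⟨k, l⟩
  fin_cases i <;> fin_cases j <;> fin_cases k <;> fin_cases l <;>
    norm_num [bellDiagonal, Fin.sum_univ_three, Fin.sum_univ_two, pauli, one_apply, single_apply,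
      cons_val_two]

lemma separableState_bellDiagonal_zero_zero_one : SeparableState (bellDiagonal ![0, 0, 1]) := by
  have hproj (k : Fin 2) : (single k k (1 : ℂ)).PosSemidef ∧ (single k k (1 : ℂ)).trace = 1 := by
    refine ⟨?_, trace_single_eq_same _ _⟩
    rw [← diagonal_single]
    exact posSemidef_diagonal_iff.mpr (Pi.single_nonneg.mpr zero_le_one)
  exact ⟨2, fun _ => 1 / 2, fun k => single k k 1, fun k => single k k 1, fun _ => by norm_num,
    by norm_num, hproj, hproj, bellDiagonal_zero_zero_one⟩

lemma posSemidef_bellDiagonal_two_thirds :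
    (bellDiagonal ![2 / 3, 2 / 3, -1 / 3]).PosSemidef := by
  have ht : (![2 / 3, 2 / 3, -1 / 3] : Fin 3 → ℝ) =
      (2 / 3 : ℝ) • ![1, 1, -1] + (1 / 3 : ℝ) • ![0, 0, 1] := by
    ext i; fin_cases i <;> norm_num
  rw [ht, bellDiagonal_smul_add_smul _ _ (by norm_num), bellDiagonal_one_one_neg_one]
  refine .add (.smul (.smul (posSemidef_vecMulVec_self_star _) ?_) ?_)
    (.smul separableState_bellDiagonal_zero_zero_one.posSemidef ?_) <;> norm_num [Complex.le_def]

lemma trace_bellDiagonal_mul_bellDiagonal (t s : Fin 3 → ℝ) :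
    (bellDiagonal t * bellDiagonal s).trace = (1 + ∑ i, (t i * s i : ℝ)) / 4 := by
  nth_rewrite 2 [bellDiagonal]
  simp only [mul_smul_comm, mul_add, Finset.mul_sum, ← one_kronecker_one, trace_smul, trace_add,
    trace_sum, trace_bellDiagonal_mul_kronecker, trace_pauli_mul_pauli]
  have hterm : ∀ i, (s i : ℂ) * (t i * (2 * 2) / 4) = t i * s i := fun i => by ring
  simp [trace_pauli, hterm]
  ring

lemma re_trace_kronecker_mul_bellDiagonal_nonneg {A B : Matrix (Fin 2) (Fin 2) ℂ}
    (hA : A.PosSemidef) (hB : B.PosSemidef) :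
    0 ≤ ((A ⊗ₖ B) * bellDiagonal ![-1, -1, 1]).trace.re := by
  have key : ((A ⊗ₖ B) * bellDiagonal ![-1, -1, 1]).trace =
      (A * (pauli 2 * B * pauli 2)).trace / 2 := by
    rw [trace_mul_comm, trace_bellDiagonal_mul_kronecker]
    simp [Fin.sum_univ_three, pauli, trace, mul_apply, Fin.sum_univ_two, vecMul, dotProduct]
    ring_nf
    simp only [I_sq]
    ring
  have hσBσ := hB.mul_mul_conjTranspose_same (pauli 2)
  rw [(isHermitian_pauli 2).eq] at hσBσ
  rw [key, Complex.div_ofNat_re]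
  exact div_nonneg (Complex.nonneg_iff.mp (hA.trace_mul_nonneg hσBσ)).1 zero_le_two

lemma not_separableState_bellDiagonal {t : Fin 3 → ℝ} (ht : 1 < t 0 + t 1 - t 2) :
    ¬ SeparableState (bellDiagonal t) := by
  intro h
  have := h.re_trace_mul_nonneg fun _ _ => re_trace_kronecker_mul_bellDiagonal_nonneg
  rw [trace_bellDiagonal_mul_bellDiagonal] at this
  simp [Fin.sum_univ_three] at this
  linarith

/-- There exist two-qubit density matrices ρ, ρ̃ with identical global and
marginal second-order moments, such that ρ is separable while ρ̃ is entangled; and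
consequently they are not local-unitary equivalent. -/
theorem moments_do_not_suffice_for_entanglement_detection :
    ∃ ρ ρt : Matrix (Fin 2 × Fin 2) (Fin 2 × Fin 2) ℂ,
      (ρ.PosSemidef ∧ ρ.trace = 1) ∧ (ρt.PosSemidef ∧ ρt.trace = 1) ∧
      ((∑ i, (bloch1 ρ i) ^ 2) = (∑ i, (bloch1 ρt i) ^ 2) ∧
       (∑ j, (bloch2 ρ j) ^ 2) = (∑ j, (bloch2 ρt j) ^ 2) ∧
       (∑ i, ∑ j, (corr ρ i j) ^ 2) = (∑ i, ∑ j, (corr ρt i j) ^ 2)) ∧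
      SeparableState ρ ∧ ¬ SeparableState ρt ∧
      ¬ ∃ U₁ U₂ : Matrix (Fin 2) (Fin 2) ℂ, IsSU2 U₁ ∧ IsSU2 U₂ ∧
          ρt = (U₁ ⊗ₖ U₂) * ρ * (U₁ ⊗ₖ U₂)ᴴ := by
  have hsep := separableState_bellDiagonal_zero_zero_one
  have hent : ¬ SeparableState (bellDiagonal ![2 / 3, 2 / 3, -1 / 3]) :=
    not_separableState_bellDiagonal (by norm_num [cons_val_two])
  refine ⟨_, _, ⟨hsep.posSemidef, trace_bellDiagonal _⟩,
    ⟨posSemidef_bellDiagonal_two_thirds, trace_bellDiagonal _⟩,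
    ⟨by simp [bloch1_bellDiagonal], by simp [bloch2_bellDiagonal], ?_⟩, hsep, hent, ?_⟩
  · rw [sum_sq_corr_bellDiagonal, sum_sq_corr_bellDiagonal]
    norm_num [Fin.sum_univ_three, cons_val_two]
  · rintro ⟨U₁, U₂, h₁, h₂, h⟩
    exact hent (h ▸ hsep.unitary_conj h₁.1 h₂.1)
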